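/- Let e_1,…,e_d be an orthonormal basis of ℝ^d, let H = span(e_1,…,e_{d-1}), and let W = {ξ ∈ S^{d-1} : |⟨ξ, e_d⟩| ≥ 1/√d}. For ξ ∈ W define the projection along ξ onto H by P_ξ(x) = x − (⟨x, e_d⟩/⟨ξ, e_d⟩)ξ. Suppose L = span(ξ, M) with M a (k−1)-dimensional subspace of H, and let L_δ(a) be the δ-neighborhood of (L + a) ∩ B(a, 1/2). Then P_ξ(L_δ(a)) is contained in the cδ-neighborhood of P_ξ(a) + (M ∩ B(0,c)) within H, where c depends only on d. -/

import Mathlib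

open MeasureTheory Set Metric ENNReal

noncomputable section

abbrev Ed (d : ℕ) := EuclideanSpace ℝ (Fin d)

instance (d : ℕ) : MeasurableSpace (Submodule ℝ (Ed d)) := ⊤

/-- `γ` is the invariant probability measure on the Grassmannian `G(d,k)`. -/
def IsGrassmannianMeasure (d k : ℕ) (γ : Measure (Submodule ℝ (Ed d))) : Prop :=
  IsProbabilityMeasure γ ∧
    (∀ θ : Ed d ≃ₗᵢ[ℝ] Ed d,
      Measure.map (fun L => Submodule.map (θ.toLinearEquiv : Ed d →ₗ[ℝ] Ed d) L) γ = γ) ∧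
    γ {L | Module.finrank ℝ L = k}ᶜ = 0

/-- The `δ`-plate `L_δ(a)`: the `δ`-neighborhood of `(L + a) ∩ B(a, 1/2)`. -/
def plate (d : ℕ) (L : Submodule ℝ (Ed d)) (δ : ℝ) (a : Ed d) : Set (Ed d) :=
  Metric.thickening δ ({x | x - a ∈ L} ∩ Metric.closedBall a (1 / 2))

/-- The plate-average maximal operator `M^k_δ`. -/
def maxOp (d : ℕ) (δ : ℝ) (f : Ed d → ℝ≥0∞) (L : Submodule ℝ (Ed d)) : ℝ≥0∞ :=
  ⨆ a : Ed d, (volume (plate d L δ a))⁻¹ * ∫⁻ x in plate d L δ a, f x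

/-! The projection `P` along `ξ` onto `u^⊥` is linear, kills `ξ` and fixes `u^⊥ ⊇ M`, so it maps
the affine plane `a + span(ξ, M)` into `P a + M`; and `‖P‖ ≤ 1 + 1 / |⟪ξ, u⟫| ≤ 1 + √d`, so it
enlarges the ball of radius `1/2` and the `δ`-neighbourhood by at most that factor. -/

section ObliqueProjection

open RealInnerProductSpace

variable {E : Type*} [NormedAddCommGroup E] [InnerProductSpace ℝ E]

/-- The projection along `ξ` onto `u^⊥`; junk value: the identity when `⟪ξ, u⟫ = 0`. -/
def obliqueProj (u ξ : E) : E →ₗ[ℝ] E where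
  toFun x := x - (⟪x, u⟫ / ⟪ξ, u⟫) • ξ
  map_add' x y := by
    simp only [inner_add_left, add_div, add_smul]
    abel
  map_smul' r x := by
    simp only [real_inner_smul_left, mul_div_assoc, smul_sub, mul_smul, RingHom.id_apply]

@[simp]
lemma obliqueProj_apply (u ξ x : E) : obliqueProj u ξ x = x - (⟪x, u⟫ / ⟪ξ, u⟫) • ξ := rfl

lemma obliqueProj_self {u ξ : E} (hξu : ⟪ξ, u⟫ ≠ 0) : obliqueProj u ξ ξ = 0 := by
  simp [div_self hξu]

lemma obliqueProj_of_inner_eq_zero {u x : E} (ξ : E) (hx : ⟪x, u⟫ = 0) :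
    obliqueProj u ξ x = x := by
  simp [hx]

lemma norm_obliqueProj_le (u ξ x : E) :
    ‖obliqueProj u ξ x‖ ≤ (1 + ‖u‖ * ‖ξ‖ / |⟪ξ, u⟫|) * ‖x‖ :=
  calc ‖obliqueProj u ξ x‖ ≤ ‖x‖ + |⟪x, u⟫| / |⟪ξ, u⟫| * ‖ξ‖ := by
        rw [obliqueProj_apply, ← abs_div, ← Real.norm_eq_abs, ← norm_smul]
        exact norm_sub_le _ _
    _ ≤ ‖x‖ + ‖x‖ * ‖u‖ / |⟪ξ, u⟫| * ‖ξ‖ := by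
        gcongr
        exact abs_real_inner_le_norm x u
    _ = (1 + ‖u‖ * ‖ξ‖ / |⟪ξ, u⟫|) * ‖x‖ := by ring

lemma map_obliqueProj_span_sup_le {u ξ : E} (hξu : ⟪ξ, u⟫ ≠ 0) {M : Submodule ℝ E}
    (hM : M ≤ (ℝ ∙ u)ᗮ) : ((ℝ ∙ ξ) ⊔ M).map (obliqueProj u ξ) ≤ M := by
  rw [Submodule.map_sup, Submodule.map_span, Set.image_singleton, obliqueProj_self hξu,
    Submodule.span_zero_singleton, bot_sup_eq, Submodule.map_le_iff_le_comap]
  intro m hm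
  rw [Submodule.mem_comap, obliqueProj_of_inner_eq_zero ξ
    (Submodule.mem_orthogonal_singleton_iff_inner_left.mp (hM hm))]
  exact hm

end ObliqueProjection

lemma image_thickening_disc_subset {E F : Type*} [SeminormedAddCommGroup E] [NormedSpace ℝ E]
    [SeminormedAddCommGroup F] [NormedSpace ℝ F] (T : E →ₗ[ℝ] F) {C : ℝ} (hC : 0 < C)
    (hT : ∀ z, ‖T z‖ ≤ C * ‖z‖) {L : Submodule ℝ E} {M : Submodule ℝ F} (hLM : L.map T ≤ M)
    (δ r : ℝ) (a : E) :
    T '' thickening δ ({x | x - a ∈ L} ∩ closedBall a r) ⊆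
      thickening (C * δ) ((T a + ·) '' ((M : Set F) ∩ closedBall 0 (C * r))) := by
  rintro _ ⟨x, hx, rfl⟩
  obtain ⟨y, ⟨hyL, hya⟩, hxy⟩ := mem_thickening_iff.mp hx
  rw [mem_closedBall, dist_eq_norm] at hya
  rw [dist_eq_norm] at hxy
  refine mem_thickening_iff.mpr ⟨T y, ⟨T (y - a), ⟨hLM ⟨y - a, hyL, rfl⟩, ?_⟩, ?_⟩, ?_⟩
  · rw [mem_closedBall_zero_iff]
    exact (hT _).trans (by gcongr)
  · simp only [map_sub, add_sub_cancel]
  · rw [dist_eq_norm, ← map_sub]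
    exact (hT _).trans_lt (by gcongr)

open RealInnerProductSpace in
theorem stmt_8_general (d k : ℕ) (hd : 1 ≤ d) :
    ∃ c > (0:ℝ), ∀ (u ξ : Ed d), ‖u‖ = 1 → ‖ξ‖ = 1 →
      (1 : ℝ) / Real.sqrt d ≤ |⟪ξ, u⟫| →
      ∀ M : Submodule ℝ (Ed d), M ≤ (ℝ ∙ u)ᗮ → Module.finrank ℝ M = k - 1 →
      ∀ (δ : ℝ), 0 < δ → ∀ a : Ed d,
      (fun x => x - (⟪x, u⟫ / ⟪ξ, u⟫) • ξ) '' plate d ((ℝ ∙ ξ) ⊔ M) δ a ⊆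
        Metric.thickening (c * δ)
          ((fun m => (a - (⟪a, u⟫ / ⟪ξ, u⟫) • ξ) + m) ''
            ((M : Set (Ed d)) ∩ Metric.closedBall 0 c)) := by
  have hsqrt : 0 < Real.sqrt d := Real.sqrt_pos.mpr (by exact_mod_cast hd)
  refine ⟨1 + Real.sqrt d, by positivity, fun u ξ hu hξ hξu M hM _ δ _ a => ?_⟩
  have hξu_pos : 0 < |⟪ξ, u⟫| := (one_div_pos.mpr hsqrt).trans_le hξu
  have hnorm : ∀ z, ‖obliqueProj u ξ z‖ ≤ (1 + Real.sqrt d) * ‖z‖ := fun z =>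
    (norm_obliqueProj_le u ξ z).trans <| by
      rw [hu, hξ, one_mul]
      gcongr
      exact (one_div_le hsqrt hξu_pos).mp hξu
  exact (image_thickening_disc_subset _ (by positivity) hnorm
    (map_obliqueProj_span_sup_le (abs_pos.mp hξu_pos) hM) δ (1 / 2) a).trans <|
    thickening_subset_of_subset _ <| image_mono <| inter_subset_inter_right _ <|
    closedBall_subset_closedBall (by linarith)

open RealInnerProductSpace in
/-- the projection along `ξ` of a `δ`-plate of `L = span(ξ, M)` is contained in a
`cδ`-neighborhood of a unit-scale `(k-1)`-disc of `M` inside the hyperplane `H = u^⊥`. -/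
theorem stmt_8 (d k : ℕ) (hd : 1 ≤ d) (hk : 1 ≤ k) (hkd : k < d) :
    ∃ c > (0:ℝ), ∀ (u ξ : Ed d), ‖u‖ = 1 → ‖ξ‖ = 1 →
      (1 : ℝ) / Real.sqrt d ≤ |⟪ξ, u⟫| →
      ∀ M : Submodule ℝ (Ed d), M ≤ (ℝ ∙ u)ᗮ → Module.finrank ℝ M = k - 1 →
      ∀ (δ : ℝ), 0 < δ → ∀ a : Ed d,
      (fun x => x - (⟪x, u⟫ / ⟪ξ, u⟫) • ξ) '' plate d ((ℝ ∙ ξ) ⊔ M) δ a ⊆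
        Metric.thickening (c * δ)
          ((fun m => (a - (⟪a, u⟫ / ⟪ξ, u⟫) • ξ) + m) ''
            ((M : Set (Ed d)) ∩ Metric.closedBall 0 c)) :=
  stmt_8_general d k hd
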